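/- arXiv:2105.11964 — 3 statements merged into one kernel-verified Lean document; each statement's English description precedes it below -/
import Mathlib

section
/- Let A be an n×p random matrix whose entries are independent and identically distributed standard Gaussian random variables N(0,1), and suppose n ≤ p. Then A Aᵀ is almost surely invertible and the entrywise expectation E[Aᵀ (A Aᵀ)⁻¹ A] equals (n/p) · I_p. (The matrix Aᵀ (A Aᵀ)⁻¹ A equals A⁺A, the orthogonal projection onto the row space of A, whenever A has full row rank.) -/
open MeasureTheory ProbabilityTheory Matrix

/-- The law of an `n × p` random matrix with i.i.d. standard Gaussian `N(0,1)` entries. -/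
noncomputable def gaussianMatrix (n p : ℕ) : Measure (Fin n → Fin p → ℝ) :=
  Measure.pi fun _ : Fin n => Measure.pi fun _ : Fin p => gaussianReal 0 1

/-!
Almost surely `A` has full row rank: `det (A Aᵀ)` is a polynomial in the entries of `A` which
is not identically zero (it equals `1` at a partial permutation matrix, as `n ≤ p`), and a
nonzero polynomial vanishes only on a null set of a product of atomless measures. Where `A` has
full row rank, `P = Aᵀ (A Aᵀ)⁻¹ A` is an orthogonal projection, so `tr P = n` and `|P i j| ≤ 1`.
The law of `A` is invariant under changing the sign of a column and under permuting the columns,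
which transform `P` into `D P D` (with `D` a diagonal sign matrix) and `P.submatrix σ σ`. Hence
`E P` is diagonal with equal diagonal entries, and these sum to `E (tr P) = n`.
-/

theorem Polynomial.ae_eval_ne_zero {μ : Measure ℝ} [NullSingletonClass μ] {r : Polynomial ℝ}
    (hr : r ≠ 0) : ∀ᵐ y ∂μ, r.eval y ≠ 0 :=
  measure_mono_null (fun y hy => by simpa using hy)
    ((Polynomial.finite_setOfPred_isRoot hr).measure_zero μ)

namespace MvPolynomial

theorem ae_eval_ne_zero_of_fin {m : ℕ} {μ : Fin m → Measure ℝ} [∀ i, SigmaFinite (μ i)]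
    [∀ i, NullSingletonClass (μ i)] {q : MvPolynomial (Fin m) ℝ} (hq : q ≠ 0) :
    ∀ᵐ x ∂Measure.pi μ, eval x q ≠ 0 := by
  induction m with
  | zero =>
    obtain ⟨a, rfl⟩ := C_surjective (Fin 0) q
    exact ae_of_all _ fun x => by simpa using hq
  | succ m ih =>
    set q' := finSuccEquiv ℝ m q
    have hlead : ∀ᵐ z ∂Measure.pi (fun j => μ j.succ), eval z q'.leadingCoeff ≠ 0 :=
      ih (Polynomial.leadingCoeff_ne_zero.mpr ((EmbeddingLike.map_ne_zero_iff).mpr hq))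
    have hsection : ∀ᵐ z ∂Measure.pi (fun j => μ j.succ), ∀ᵐ y ∂μ 0,
        eval (Fin.cons y z) q ≠ 0 := by
      filter_upwards [hlead] with z hz
      have hr : q'.map (eval z) ≠ 0 := fun h => hz <| by
        rw [Polynomial.leadingCoeff, ← Polynomial.coeff_map, h, Polynomial.coeff_zero]
      simpa only [eval_eq_eval_mv_eval'] using Polynomial.ae_eval_ne_zero hr
    have hmeas : MeasurableSet {zy : (Fin m → ℝ) × ℝ | eval (Fin.cons zy.2 zy.1) q ≠ 0} :=
      (isOpen_compl_singleton.preimage ((continuous_eval q).comp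
        (continuous_snd.finCons continuous_fst))).measurableSet
    have hprod := (Measure.measurePreserving_swap.quasiMeasurePreserving).ae
      ((Measure.ae_prod_iff_ae_ae hmeas).2 hsection)
    have hmp := measurePreserving_piFinSuccAbove μ 0
    filter_upwards [hmp.quasiMeasurePreserving.ae hprod] with x hx
    simpa [Fin.cons_self_tail] using hx

theorem ae_eval_ne_zero {ι : Type*} [Fintype ι] {μ : ι → Measure ℝ} [∀ i, SigmaFinite (μ i)]
    [∀ i, NullSingletonClass (μ i)] {q : MvPolynomial ι ℝ} (hq : q ≠ 0) :
    ∀ᵐ x ∂Measure.pi μ, eval x q ≠ 0 := by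
  let e := Fintype.equivFin ι
  have hmp := (measurePreserving_piCongrLeft (α := fun _ => ℝ) μ e.symm).symm
  have hrename : rename e q ≠ 0 := (rename_injective _ e.injective).ne_iff' (map_zero _) |>.mpr hq
  filter_upwards [hmp.quasiMeasurePreserving.ae (ae_eval_ne_zero_of_fin hrename)] with x hx
  simpa [eval_rename, Function.comp_def, MeasurableEquiv.piCongrLeft] using hx

end MvPolynomial

namespace Matrix

theorem IsSymm.abs_apply_le_one_of_isIdempotentElem {n R : Type*} [Fintype n] [CommRing R]
    [LinearOrder R] [IsStrictOrderedRing R] {P : Matrix n n R} (hP : P.IsSymm)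
    (hidem : IsIdempotentElem P) (i j : n) : |P i j| ≤ 1 := by
  have hdiag : P i i = ∑ k, P i k ^ 2 := by
    conv_lhs => rw [← hidem.eq]
    simp only [mul_apply, sq, hP.apply i]
  have hle : ∀ k, P i k ^ 2 ≤ P i i := fun k =>
    hdiag ▸ Finset.single_le_sum (fun k _ => sq_nonneg (P i k)) (Finset.mem_univ k)
  have hii : P i i ≤ 1 := by nlinarith [hle i]
  exact sq_le_one_iff_abs_le_one _ |>.mp ((hle j).trans hii)

variable {m n R : Type*} [Fintype m] [Fintype n] [DecidableEq m]

section CommRing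

variable [CommRing R] (A : Matrix m n R)

noncomputable def rowProj : Matrix n n R := Aᵀ * (A * Aᵀ)⁻¹ * A

theorem isSymm_rowProj : (rowProj A).IsSymm := by
  simp only [IsSymm, rowProj, transpose_mul, transpose_transpose, transpose_nonsing_inv,
    Matrix.mul_assoc]

variable {A}

theorem isIdempotentElem_rowProj (hA : IsUnit (A * Aᵀ).det) : IsIdempotentElem (rowProj A) := by
  simp only [IsIdempotentElem, rowProj, Matrix.mul_assoc]
  rw [← Matrix.mul_assoc A, ← Matrix.mul_assoc _ (A * Aᵀ), nonsing_inv_mul _ hA, Matrix.one_mul]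

theorem trace_rowProj (hA : IsUnit (A * Aᵀ).det) : (rowProj A).trace = Fintype.card m := by
  rw [rowProj, Matrix.mul_assoc, trace_mul_comm, Matrix.mul_assoc, nonsing_inv_mul _ hA,
    trace_one]

theorem rowProj_of_not_isUnit (hA : ¬IsUnit (A * Aᵀ).det) : rowProj A = 0 := by
  simp [rowProj, nonsing_inv_apply_not_isUnit _ hA]

theorem rowProj_mul [DecidableEq n] (A : Matrix m n R) {Q : Matrix n n R} (hQ : Q * Qᵀ = 1) :
    rowProj (A * Q) = Qᵀ * rowProj A * Q := by
  have hgram : A * Q * (A * Q)ᵀ = A * Aᵀ := by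
    rw [transpose_mul, Matrix.mul_assoc, ← Matrix.mul_assoc Q, hQ, Matrix.one_mul]
  rw [rowProj, rowProj, hgram]
  simp only [transpose_mul, Matrix.mul_assoc]

theorem rowProj_submatrix (A : Matrix m n R) (σ : n ≃ n) :
    rowProj (A.submatrix id σ) = (rowProj A).submatrix σ σ := by
  rw [rowProj, rowProj, transpose_submatrix, submatrix_mul_equiv, submatrix_id_id,
    submatrix_mul (e₂ := id) (he₂ := Function.bijective_id),
    submatrix_mul (e₂ := id) (he₂ := Function.bijective_id), submatrix_id_id]

end CommRing

theorem abs_rowProj_apply_le_one [CommRing R] [LinearOrder R] [IsStrictOrderedRing R]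
    (A : Matrix m n R) (i j : n) : |rowProj A i j| ≤ 1 := by
  by_cases hA : IsUnit (A * Aᵀ).det
  · exact (isSymm_rowProj A).abs_apply_le_one_of_isIdempotentElem
      (isIdempotentElem_rowProj hA) i j
  · simp [rowProj_of_not_isUnit hA]

end Matrix

theorem MeasureTheory.MeasurePreserving.integral_comp_of_aestronglyMeasurable {α β E : Type*}
    [MeasurableSpace α] [MeasurableSpace β] [NormedAddCommGroup E] [NormedSpace ℝ E]
    {μ : Measure α} {ν : Measure β} {T : α → β} (hT : MeasurePreserving T μ ν) {g : β → E}
    (hg : AEStronglyMeasurable g ν) : ∫ x, g (T x) ∂μ = ∫ y, g y ∂ν := by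
  rw [← hT.map_eq] at hg ⊢
  exact (integral_map hT.aemeasurable hg).symm

instance ProbabilityTheory.isNegInvariant_gaussianReal (v : NNReal) :
    Measure.IsNegInvariant (gaussianReal 0 v) :=
  ⟨by simpa [Measure.neg_def] using gaussianReal_map_neg (μ := 0) (v := v)⟩

theorem MeasureTheory.Measure.pi_map_curry {ι κ X : Type*} [Fintype ι] [Fintype κ]
    [MeasurableSpace X] (μ : ι → κ → Measure X) [∀ i j, IsProbabilityMeasure (μ i j)] :
    (Measure.pi fun p : ι × κ => μ p.1 p.2).map (MeasurableEquiv.curry ι κ X) =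
      Measure.pi fun i => Measure.pi fun j => μ i j := by
  simpa [Measure.infinitePi_eq_pi] using Measure.infinitePi_map_curry μ

section RandomMatrix

noncomputable abbrev iidMatrixMeasure (μ : Measure ℝ) (ι κ : Type*) [Fintype ι] [Fintype κ] :
    Measure (ι → κ → ℝ) :=
  Measure.pi fun _ : ι => Measure.pi fun _ : κ => μ

variable {ι κ : Type*} [Fintype ι] [Fintype κ] {μ : Measure ℝ}

theorem measurable_rowProj_apply [DecidableEq ι] (i j : κ) :
    Measurable fun A : ι → κ → ℝ => rowProj (of A) i j := by
  have hA : Continuous fun A : ι → κ → ℝ => of A := continuous_id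
  have hgram : Continuous fun A : ι → κ → ℝ => of A * (of A)ᵀ := hA.matrix_mul hA.matrix_transpose
  have hrowProj : (fun A : ι → κ → ℝ => rowProj (of A) i j) = fun A =>
      (of A * (of A)ᵀ).det⁻¹ * ((of A)ᵀ * (of A * (of A)ᵀ).adjugate * of A) i j := by
    funext A
    simp [rowProj, inv_def, Matrix.smul_mul, Matrix.mul_smul, Ring.inverse_eq_inv']
  rw [hrowProj]
  exact hgram.matrix_det.measurable.inv.mul
    (((hA.matrix_transpose.matrix_mul hgram.matrix_adjugate).matrix_mul hA).matrix_elem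
      i j).measurable

theorem integrable_rowProj_apply [IsFiniteMeasure μ] [DecidableEq ι] (i j : κ) :
    Integrable (fun A : ι → κ → ℝ => rowProj (of A) i j) (iidMatrixMeasure μ ι κ) :=
  (integrable_const (1 : ℝ)).mono' (measurable_rowProj_apply i j).aestronglyMeasurable
    (ae_of_all _ fun A => abs_rowProj_apply_le_one (of A) i j)

theorem ae_isUnit_det_mul_transpose [IsProbabilityMeasure μ] [NullSingletonClass μ]
    [DecidableEq ι] (h : Fintype.card ι ≤ Fintype.card κ) :
    ∀ᵐ A ∂(iidMatrixMeasure μ ι κ), IsUnit (of A * (of A)ᵀ).det := by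
  classical
  let X : Matrix ι κ (MvPolynomial (ι × κ) ℝ) := of fun i j => MvPolynomial.X (i, j)
  have heval : ∀ x : ι × κ → ℝ, MvPolynomial.eval x (X * Xᵀ).det =
      (of (Function.curry x) * (of (Function.curry x))ᵀ).det := fun x => by
    have hX : X.map (MvPolynomial.eval x) = of (Function.curry x) := by ext; simp [X]
    rw [RingHom.map_det, RingHom.mapMatrix_apply, Matrix.map_mul, transpose_map, hX]
  obtain ⟨e⟩ := Function.Embedding.nonempty_of_card_le h
  have hq : (X * Xᵀ).det ≠ 0 := fun h0 => by
    have hgram :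
        (1 : Matrix κ κ ℝ).submatrix e id * ((1 : Matrix κ κ ℝ).submatrix e id)ᵀ = 1 := by
      rw [transpose_submatrix, ← submatrix_mul _ _ _ _ _ Function.bijective_id, transpose_one,
        Matrix.one_mul, submatrix_one_embedding]
    have hx : of (Function.curry fun p => (1 : Matrix κ κ ℝ) (e p.1) p.2) =
        (1 : Matrix κ κ ℝ).submatrix e id := rfl
    have h1 := heval fun p => (1 : Matrix κ κ ℝ) (e p.1) p.2
    rw [h0, map_zero, hx, hgram, det_one] at h1
    exact zero_ne_one h1
  rw [iidMatrixMeasure, ← Measure.pi_map_curry,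
    (MeasurableEquiv.curry ι κ ℝ).measurableEmbedding.ae_map_iff]
  filter_upwards [MvPolynomial.ae_eval_ne_zero hq] with x hx
  exact isUnit_iff_ne_zero.mpr (heval x ▸ hx)

theorem measurePreserving_negCol [SigmaFinite μ] [μ.IsNegInvariant] [DecidableEq κ] (j₀ : κ) :
    MeasurePreserving (fun (A : ι → κ → ℝ) i j => if j = j₀ then -A i j else A i j)
      (iidMatrixMeasure μ ι κ) (iidMatrixMeasure μ ι κ) :=
  measurePreserving_pi _ _ fun _ =>
    measurePreserving_pi (f := fun j x => if j = j₀ then -x else x) _ _ fun j => by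
      rcases eq_or_ne j j₀ with rfl | hj
      · simpa using Measure.measurePreserving_neg μ
      · simp only [hj, if_false]
        exact .id μ

theorem measurePreserving_permuteCols [SigmaFinite μ] (σ : Equiv.Perm κ) :
    MeasurePreserving (fun (A : ι → κ → ℝ) i j => A i (σ j))
      (iidMatrixMeasure μ ι κ) (iidMatrixMeasure μ ι κ) :=
  measurePreserving_pi _ _ fun _ =>
    measurePreserving_arrowCongr' (fun _ => μ) (fun _ => μ) σ.symm (.refl ℝ) fun _ => .id μ

theorem integral_rowProj_apply_eq_zero [SigmaFinite μ] [μ.IsNegInvariant] [DecidableEq ι]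
    {i j : κ} (hij : i ≠ j) :
    ∫ A, rowProj (of A) i j ∂(iidMatrixMeasure μ ι κ) = 0 := by
  classical
  let s : κ → ℝ := fun k => if k = j then -1 else 1
  have hs : diagonal s * (diagonal s)ᵀ = 1 := by
    rw [diagonal_transpose, diagonal_mul_diagonal, ← diagonal_one]
    congr 1
    funext k
    by_cases hk : k = j <;> simp [s, hk]
  have hflip : ∀ A : ι → κ → ℝ,
      rowProj (of fun i' k => if k = j then -A i' k else A i' k) i j = -rowProj (of A) i j := by
    intro A
    have hA : (of fun i' k => if k = j then -A i' k else A i' k) = of A * diagonal s := by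
      ext i' k
      by_cases hk : k = j <;> simp [s, hk]
    rw [hA, rowProj_mul _ hs]
    simp [s, hij, diagonal_mul, mul_diagonal]
  have h := (measurePreserving_negCol (ι := ι) (μ := μ) j).integral_comp_of_aestronglyMeasurable
    (measurable_rowProj_apply i j).aestronglyMeasurable
  simp only [hflip, integral_neg] at h
  linarith

theorem integral_rowProj_apply_self_eq [SigmaFinite μ] [DecidableEq ι] (i j : κ) :
    ∫ A, rowProj (of A) i i ∂(iidMatrixMeasure μ ι κ) =
      ∫ A, rowProj (of A) j j ∂(iidMatrixMeasure μ ι κ) := by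
  classical
  have hswap : ∀ A : ι → κ → ℝ,
      rowProj (of fun i' k => A i' (Equiv.swap i j k)) i i = rowProj (of A) j j := fun A =>
    (congrFun₂ (rowProj_submatrix (of A) (Equiv.swap i j)) i i).trans (by simp)
  rw [← (measurePreserving_permuteCols (Equiv.swap i j)).integral_comp_of_aestronglyMeasurable
    (measurable_rowProj_apply i i).aestronglyMeasurable]
  simp only [hswap]

theorem integral_rowProj_apply_self [IsProbabilityMeasure μ] [NullSingletonClass μ]
    [DecidableEq ι] (h : Fintype.card ι ≤ Fintype.card κ) (i : κ) :
    ∫ A, rowProj (of A) i i ∂(iidMatrixMeasure μ ι κ) = Fintype.card ι / Fintype.card κ := by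
  have htrace : ∑ k, ∫ A, rowProj (of A) k k ∂(iidMatrixMeasure μ ι κ) = Fintype.card ι := by
    rw [← integral_finsetSum _ fun k _ => integrable_rowProj_apply k k]
    calc _ = ∫ _, (Fintype.card ι : ℝ) ∂(iidMatrixMeasure μ ι κ) :=
          integral_congr_ae <| (ae_isUnit_det_mul_transpose h).mono fun A hA => trace_rowProj hA
      _ = Fintype.card ι := by simp
  rw [Finset.sum_congr rfl fun k _ => integral_rowProj_apply_self_eq k i, Finset.sum_const,
    Finset.card_univ, nsmul_eq_mul] at htrace
  have hκ : (Fintype.card κ : ℝ) ≠ 0 := Nat.cast_ne_zero.mpr (Fintype.card_pos_iff.mpr ⟨i⟩).ne'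
  field_simp
  linarith

theorem integral_rowProj_eq_smul_one [IsProbabilityMeasure μ] [NullSingletonClass μ]
    [μ.IsNegInvariant] [DecidableEq ι] [DecidableEq κ] (h : Fintype.card ι ≤ Fintype.card κ) :
    (of fun i j => ∫ A, rowProj (of A) i j ∂(iidMatrixMeasure μ ι κ))
      = ((Fintype.card ι : ℝ) / Fintype.card κ) • (1 : Matrix κ κ ℝ) := by
  ext i j
  rcases eq_or_ne i j with rfl | hij
  · simp [integral_rowProj_apply_self h]
  · simp [hij, integral_rowProj_apply_eq_zero hij]

end RandomMatrix

/-- for an `n × p` matrix `A` with i.i.d. standard Gaussian entries and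
`n ≤ p`, `A Aᵀ` is almost surely invertible and the entrywise expectation
`E[Aᵀ (A Aᵀ)⁻¹ A]` equals `(n/p) · I_p`. -/
theorem gaussian_expectation_projection
    {n p : ℕ} (h : n ≤ p) :
    (∀ᵐ A ∂(gaussianMatrix n p), IsUnit (Matrix.of A * (Matrix.of A)ᵀ).det)
    ∧ (Matrix.of fun i j =>
          ∫ A, ((Matrix.of A)ᵀ * (Matrix.of A * (Matrix.of A)ᵀ)⁻¹ * Matrix.of A) i j
            ∂(gaussianMatrix n p))
        = ((n : ℝ) / (p : ℝ)) • (1 : Matrix (Fin p) (Fin p) ℝ) := by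
  have := nullSingletonClass_gaussianReal (μ := 0) one_ne_zero
  have hcard : Fintype.card (Fin n) ≤ Fintype.card (Fin p) := by simpa using h
  have hmean := integral_rowProj_eq_smul_one (μ := gaussianReal 0 1) hcard
  rw [Fintype.card_fin, Fintype.card_fin] at hmean
  exact ⟨ae_isUnit_det_mul_transpose hcard, hmean⟩
end

section
/- (Corollary 2, first part.) Fix real numbers σ_x > 0, σ_v > 0, p > 0 and n, and define for real s ∈ [0, p] the function ε(s) = (s/(n − s − 1)) (σ_x² (p − s) + σ_v²) + σ_x² (p − s). If n > p + σ_v²/σ_x² + 1, then ε is strictly monotonically decreasing on the interval [0, p]. -/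
/-! Clearing the denominator, `ε` is the linear fractional function
`ε(s) = (σ_x²(n-1) - σ_v²) - (n-1)(σ_x²(n-1-p) - σ_v²) / (n-1-s)`,
and the hypothesis on `n` says exactly that the numerator `(n-1)(σ_x²(n-1-p) - σ_v²)` is positive.
A constant minus a positive multiple of `1/(a - s)` decreases strictly for `s < a = n - 1`. -/

lemma strictAntiOn_const_sub_div_sub {𝕜 : Type*} [Field 𝕜] [LinearOrder 𝕜] [IsStrictOrderedRing 𝕜]
    {C K a : 𝕜} (hK : 0 < K) : StrictAntiOn (fun s => C - K / (a - s)) (Set.Iio a) := by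
  intro x _ y hy hxy
  have hy' : 0 < a - y := sub_pos.mpr hy
  dsimp only
  gcongr

lemma expected_mse_eq_const_sub_div {𝕜 : Type*} [Field 𝕜] (b c p n s : 𝕜) (hs : n - s - 1 ≠ 0) :
    s / (n - s - 1) * (b * (p - s) + c) + b * (p - s) =
      (b * (n - 1) - c) - (n - 1) * (b * (n - 1 - p) - c) / (n - 1 - s) := by
  rw [show n - 1 - s = n - s - 1 by ring]
  field_simp
  ring

theorem expected_mse_strictAntiOn_general
    (σx σv p n : ℝ) (hσx : 0 < σx) (hp : 0 < p)
    (hn : n > p + σv ^ 2 / σx ^ 2 + 1) :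
    StrictAntiOn
      (fun s : ℝ => s / (n - s - 1) * (σx ^ 2 * (p - s) + σv ^ 2) + σx ^ 2 * (p - s))
      (Set.Icc 0 p) := by
  have hσx2 : 0 < σx ^ 2 := by positivity
  have hgap : σv ^ 2 < σx ^ 2 * (n - 1 - p) :=
    (div_lt_iff₀' hσx2).mp (by linarith)
  have hpn : p < n - 1 := by linarith [div_nonneg (sq_nonneg σv) hσx2.le]
  have hK : 0 < (n - 1) * (σx ^ 2 * (n - 1 - p) - σv ^ 2) :=
    mul_pos (by linarith) (sub_pos.mpr hgap)
  refine ((strictAntiOn_const_sub_div_sub (C := σx ^ 2 * (n - 1) - σv ^ 2) hK).mono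
    fun s hs => lt_of_le_of_lt hs.2 hpn).congr fun s hs => ?_
  exact (expected_mse_eq_const_sub_div _ _ p n s (by linarith [hs.2])).symm

/-- Corollary 2, first part: the expected MSE
`ε(s) = (s/(n − s − 1))(σ_x²(p − s) + σ_v²) + σ_x²(p − s)`, with the assumed model order
`s = p_S` treated as a continuous variable, is strictly monotonically decreasing on
`[0, p]` whenever `n > p + σ_v²/σ_x² + 1`. -/
theorem expected_mse_strictAntiOn
    (σx σv p n : ℝ) (hσx : 0 < σx) (hσv : 0 < σv) (hp : 0 < p)
    (hn : n > p + σv ^ 2 / σx ^ 2 + 1) :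
    StrictAntiOn
      (fun s : ℝ => s / (n - s - 1) * (σx ^ 2 * (p - s) + σv ^ 2) + σx ^ 2 * (p - s))
      (Set.Icc 0 p) :=
  expected_mse_strictAntiOn_general σx σv p n hσx hp hn
end

section
/- (Corollary 2, second part.) Fix real numbers σ_x > 0, σ_v > 0, p > 0 and n, and define for real s ∈ [0, p] the function ε(s) = (s/(n − s − 1)) (σ_x² (p − s) + σ_v²) + σ_x² (p − s). If p + 1 < n < p + σ_v²/σ_x² + 1, then ε is strictly monotonically increasing on the interval [0, p]. -/
/-! With `m = n - 1`, a partial fraction decomposition gives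
`ε(s) = σ_x² m - σ_v² + m (σ_v² - σ_x² (m - p)) / (m - s)`. The upper bound on `n` makes the
numerator `m (σ_v² - σ_x² (m - p))` positive and the lower bound keeps the pole `s = m` to the
right of `[0, p]`, so `ε` is a positive multiple of `1 / (m - s)` plus a constant there. -/

open Set

theorem strictMonoOn_const_add_div_sub (C K m : ℝ) (hK : 0 < K) :
    StrictMonoOn (fun s : ℝ => C + K / (m - s)) (Iio m) := fun a _ b hb hab =>
  add_lt_add_right (div_lt_div_of_pos_left hK (sub_pos.2 hb) (by linarith)) C

theorem div_sub_mul_add_mul_eq_add_div (a b m p s : ℝ) (hs : m - s ≠ 0) :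
    s / (m - s) * (a * (p - s) + b) + a * (p - s)
      = a * m - b + m * (b - a * (m - p)) / (m - s) := by
  field_simp
  ring

theorem expected_mse_strictMonoOn_general
    (σx σv p n : ℝ) (hσx : 0 < σx) (hp : 0 < p)
    (hn₁ : p + 1 < n) (hn₂ : n < p + σv ^ 2 / σx ^ 2 + 1) :
    StrictMonoOn
      (fun s : ℝ => s / (n - s - 1) * (σx ^ 2 * (p - s) + σv ^ 2) + σx ^ 2 * (p - s))
      (Set.Icc 0 p) := by
  have hnum : 0 < σv ^ 2 - σx ^ 2 * (n - 1 - p) := by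
    have := (lt_div_iff₀ (by positivity)).1 (show n - 1 - p < σv ^ 2 / σx ^ 2 by linarith)
    linarith
  have hpole : Icc 0 p ⊆ Iio (n - 1) := fun s hs => by simp only [mem_Iio]; linarith [hs.2]
  have hK : 0 < (n - 1) * (σv ^ 2 - σx ^ 2 * (n - 1 - p)) := mul_pos (by linarith) hnum
  refine ((strictMonoOn_const_add_div_sub (σx ^ 2 * (n - 1) - σv ^ 2) _ (n - 1) hK).mono
    hpole).congr fun s hs => ?_
  rw [show n - s - 1 = n - 1 - s by ring,
    div_sub_mul_add_mul_eq_add_div _ _ _ _ _ (sub_pos.2 (hpole hs)).ne']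

/-- Corollary 2, second part: the expected MSE
`ε(s) = (s/(n − s − 1))(σ_x²(p − s) + σ_v²) + σ_x²(p − s)`, with the assumed model order
`s = p_S` treated as a continuous variable, is strictly monotonically increasing on
`[0, p]` whenever `p + 1 < n < p + σ_v²/σ_x² + 1`. -/
theorem expected_mse_strictMonoOn
    (σx σv p n : ℝ) (hσx : 0 < σx) (hσv : 0 < σv) (hp : 0 < p)
    (hn₁ : p + 1 < n) (hn₂ : n < p + σv ^ 2 / σx ^ 2 + 1) :
    StrictMonoOn
      (fun s : ℝ => s / (n - s - 1) * (σx ^ 2 * (p - s) + σv ^ 2) + σx ^ 2 * (p - s))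
      (Set.Icc 0 p) :=
  expected_mse_strictMonoOn_general σx σv p n hσx hp hn₁ hn₂
end
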